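/- arXiv:1006.0514 — 6 statements merged into one kernel-verified Lean document; each statement's English description precedes it below -/
import Mathlib

section
/- The additive subgroup of F generated by the image of S equals F if and only if e is the multiplicative order of p modulo n, i.e. e is the least i ≥ 1 with p^i ≡ 1 (mod n). -/
/-- Let `p` be prime, `e ≥ 1`, `q = p^e`, `F` a finite field with `q`
elements, `n` a divisor of `q - 1`, and `S` the subgroup of order `n` of `Fˣ`.
The additive subgroup of `F` generated by the image of `S` equals `F` if and only if
`e` is the multiplicative order of `p` modulo `n`, i.e. `e` is the least `i ≥ 1` with
`p ^ i ≡ 1 (mod n)`. -/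
theorem addClosure_image_eq_top_iff_order
    (p e n : ℕ) (hp : p.Prime) (he : 1 ≤ e)
    (F : Type) [Field F] [Fintype F] (hq : Fintype.card F = p ^ e)
    (hn : n ∣ p ^ e - 1)
    (S : Subgroup Fˣ) (hS : Nat.card S = n) :
    AddSubgroup.closure (Units.val '' (S : Set Fˣ)) = ⊤ ↔
      IsLeast {i : ℕ | 1 ≤ i ∧ p ^ i ≡ 1 [MOD n]} e := by
  classical
  have hp2 : 2 ≤ p := hp.two_le
  haveI : Fact p.Prime := ⟨hp⟩
  set T : Set F := Units.val '' (S : Set Fˣ) with hT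
  have hq1 : 1 < p ^ e := Nat.one_lt_pow (by omega) (by omega)
  have hn0 : n ≠ 0 := by
    rintro rfl
    have := Nat.eq_zero_of_zero_dvd hn
    omega
  -- characteristic of F is p
  haveI hcharF : CharP F p := by
    have h1 : ((p ^ e : ℕ) : F) = 0 := by
      rw [← hq]; exact FiniteField.cast_card_eq_zero F
    have h2 : ringChar F ∣ p ^ e := (CharP.cast_eq_zero_iff F (ringChar F) _).mp h1
    have hprime : (ringChar F).Prime := by
      rcases CharP.char_is_prime_or_zero F (ringChar F) with h | h
      · exact h
      · rw [h] at h2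
        have := Nat.eq_zero_of_zero_dvd h2
        omega
    have h3 : ringChar F = p :=
      (Nat.prime_dvd_prime_iff_eq hprime hp).mp (hprime.dvd_of_dvd_pow h2)
    exact h3 ▸ ringChar.charP F
  -- order-of-p-mod-n setup
  have hpe1 : p ^ e ≡ 1 [MOD n] :=
    ((Nat.modEq_iff_dvd' (le_of_lt hq1)).mpr hn).symm
  have hxe : (p : ZMod n) ^ e = 1 := by
    have h := (ZMod.natCast_eq_natCast_iff _ _ _).mpr hpe1
    push_cast at h
    exact h
  set d := orderOf ((p : ZMod n)) with hd
  have hdpos : 0 < d :=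
    orderOf_pos_iff.mpr (isOfFinOrder_iff_pow_eq_one.mpr ⟨e, he, hxe⟩)
  have hde : d ∣ e := orderOf_dvd_of_pow_eq_one hxe
  have hmod : ∀ i, p ^ i ≡ 1 [MOD n] ↔ d ∣ i := by
    intro i
    constructor
    · intro h
      refine orderOf_dvd_of_pow_eq_one ?_
      have h' := (ZMod.natCast_eq_natCast_iff _ _ _).mpr h
      push_cast at h'
      exact h'
    · intro h
      have h1 : (p : ZMod n) ^ i = 1 := orderOf_dvd_iff_pow_eq_one.mp h
      have h2 : ((p ^ i : ℕ) : ZMod n) = ((1 : ℕ) : ZMod n) := by push_cast; exact h1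
      exact (ZMod.natCast_eq_natCast_iff _ _ _).mp h2
  have hpd1 : 1 ≤ p ^ d := Nat.one_le_pow _ _ (by omega)
  -- the RHS is equivalent to `e = d`
  have hRHS : IsLeast {i : ℕ | 1 ≤ i ∧ p ^ i ≡ 1 [MOD n]} e ↔ e = d := by
    constructor
    · rintro ⟨-, hlb⟩
      have h1 : e ≤ d := hlb ⟨hdpos, (hmod d).mpr dvd_rfl⟩
      exact le_antisymm h1 (Nat.le_of_dvd (by omega) hde)
    · intro hED
      refine ⟨⟨he, (hmod e).mpr (hED ▸ dvd_rfl)⟩, ?_⟩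
      rintro i ⟨hi1, hi2⟩
      have hdi : d ∣ i := (hmod i).mp hi2
      calc e = d := hED
        _ ≤ i := Nat.le_of_dvd hi1 hdi
  rw [hRHS]
  constructor
  · -- if the additive closure is everything then e ≤ d
    intro htop
    -- the subring of elements fixed by the d-th Frobenius iterate
    have hzero : (0 : F) ^ p ^ d = 0 := zero_pow (by positivity)
    let K : Subring F :=
      { carrier := {x : F | x ^ p ^ d = x}
        one_mem' := one_pow _
        mul_mem' := fun {a b} ha hb => by
          simp only [Set.mem_setOf_eq] at *
          rw [mul_pow, ha, hb]
        zero_mem' := hzero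
        add_mem' := fun {a b} ha hb => by
          simp only [Set.mem_setOf_eq] at *
          rw [add_pow_char_pow, ha, hb]
        neg_mem' := fun {a} ha => by
          simp only [Set.mem_setOf_eq] at *
          have : ((0 : F) - a) ^ p ^ d = (0 : F) ^ p ^ d - a ^ p ^ d :=
            sub_pow_char_pow ..
          simpa [hzero, ha] using this }
    have hnd : n ∣ p ^ d - 1 :=
      (Nat.modEq_iff_dvd' hpd1).mp ((hmod d).mpr dvd_rfl).symm
    have hTK : T ⊆ (K : Set F) := by
      rintro _ ⟨u, hu, rfl⟩
      show (u : F) ^ p ^ d = u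
      have hun : u ^ n = 1 := by
        have h1 : (⟨u, hu⟩ : S) ^ n = 1 := by rw [← hS]; exact pow_card_eq_one'
        have h2 := congrArg (S.subtype) h1
        simpa using h2
      obtain ⟨c, hc⟩ := hnd
      have h1 : u ^ (p ^ d - 1) = 1 := by
        rw [hc, pow_mul, hun, one_pow]
      have h2 : u ^ p ^ d = u := by
        have hsplit : p ^ d = (p ^ d - 1) + 1 := by omega
        rw [hsplit, pow_succ, h1, one_mul]
      have := congrArg Units.val h2
      simpa using this
    have hcl : AddSubgroup.closure T ≤ K.toAddSubgroup :=
      (AddSubgroup.closure_le _).mpr hTK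
    rw [htop] at hcl
    have hall : ∀ x : F, x ^ p ^ d = x := fun x => hcl (AddSubgroup.mem_top x)
    -- take a generator of Fˣ
    obtain ⟨g, hg⟩ := IsCyclic.exists_generator (α := Fˣ)
    have hog : orderOf g = p ^ e - 1 := by
      rw [orderOf_eq_card_of_forall_mem_zpowers hg, Nat.card_eq_fintype_card, Fintype.card_units, hq]
    have hgfix : (g : F) ^ p ^ d = g := hall _
    have hg2 : g ^ p ^ d = g := Units.ext (by simpa using hgfix)
    have h3 : g ^ (p ^ d - 1) = 1 := by
      have h4 : g ^ (p ^ d - 1) * g = 1 * g := by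
        rw [one_mul, ← pow_succ]
        rw [show (p ^ d - 1) + 1 = p ^ d by omega]
        exact hg2
      exact mul_right_cancel h4
    have h5 : p ^ e - 1 ∣ p ^ d - 1 := hog ▸ orderOf_dvd_of_pow_eq_one h3
    have hpd2 : 2 ≤ p ^ d := by
      calc 2 = 2 ^ 1 := rfl
        _ ≤ p ^ d := Nat.pow_le_pow_left hp2 1 |>.trans (Nat.pow_le_pow_right (by omega) hdpos)
    have h6 : p ^ e - 1 ≤ p ^ d - 1 := Nat.le_of_dvd (by omega) h5
    have h7 : p ^ e ≤ p ^ d := by omega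
    have h8 : e ≤ d := (Nat.pow_le_pow_iff_right hp.one_lt).mp h7
    exact le_antisymm h8 (Nat.le_of_dvd (by omega) hde)
  · -- if e = d then the closure is everything
    intro hED
    -- additive closure coincides with the subring closure
    have hTset : T = ↑(Submonoid.map (Units.coeHom F) S.toSubmonoid) := by
      ext x
      simp [hT, Submonoid.coe_map]
    have hcset : (Submonoid.closure T : Set F) = T := by
      rw [hTset, Submonoid.closure_eq]
    have hmem_iff : ∀ x : F, x ∈ AddSubgroup.closure T ↔ x ∈ Subring.closure T := fun x => by
      rw [Subring.mem_closure_iff, hcset]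
    suffices hAtop : Subring.closure T = ⊤ by
      rw [AddSubgroup.eq_top_iff']
      intro x
      rw [hmem_iff, hAtop]
      trivial
    set A := Subring.closure T with hA
    haveI : Fintype A := Fintype.ofFinite A
    letI : Field A := Fintype.fieldOfDomain A
    obtain ⟨m, -, hcardA⟩ := FiniteField.card A p
    have hTA : ∀ u : Fˣ, u ∈ S → (u : F) ∈ A := fun u hu =>
      Subring.subset_closure ⟨u, hu, rfl⟩
    let f : S →* A :=
      { toFun := fun s => ⟨((s : Fˣ) : F), hTA _ s.2⟩
        map_one' := rfl
        map_mul' := fun a b => rfl }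
    have hfinj : Function.Injective f.toHomUnits := by
      intro a b h
      have h1 : ((f.toHomUnits a : Aˣ) : A) = ((f.toHomUnits b : Aˣ) : A) :=
        congrArg Units.val h
      rw [MonoidHom.coe_toHomUnits, MonoidHom.coe_toHomUnits] at h1
      have h2 : ((a : Fˣ) : F) = ((b : Fˣ) : F) := congrArg Subtype.val h1
      exact Subtype.ext (Units.ext h2)
    have hdvd : n ∣ p ^ (m : ℕ) - 1 := by
      have h1 : Nat.card S ∣ Nat.card Aˣ := Subgroup.card_dvd_of_injective f.toHomUnits hfinj
      rwa [hS, Nat.card_units, Nat.card_eq_fintype_card, hcardA] at h1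
    have hpm1 : 1 ≤ p ^ (m : ℕ) := Nat.one_le_pow _ _ (by omega)
    have hdm : d ∣ (m : ℕ) :=
      (hmod m).mp ((Nat.modEq_iff_dvd' hpm1).mpr hdvd).symm
    have hem : e ≤ (m : ℕ) := hED ▸ Nat.le_of_dvd m.pos hdm
    have hle : Fintype.card A ≤ Fintype.card F :=
      Fintype.card_le_of_injective _ Subtype.val_injective
    have hme : (m : ℕ) ≤ e := by
      rw [hcardA, hq] at hle
      exact (Nat.pow_le_pow_iff_right hp.one_lt).mp hle
    have hcard : Fintype.card A = Fintype.card F := by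
      rw [hcardA, hq]
      congr 1
      omega
    have hbij : Function.Bijective ((↑) : A → F) :=
      Subtype.val_injective.bijective_of_nat_card_le
        (by rw [Nat.card_eq_fintype_card, Nat.card_eq_fintype_card, hcard])
    rw [Subring.eq_top_iff']
    intro x
    obtain ⟨y, rfl⟩ := hbij.surjective x
    exact y.2
end

section
/- The additive subgroup of F generated by the image of S equals F if and only if the only subspaces W of F, viewed as a vector space over its prime field F_p, which satisfy s·W ⊆ W for every s ∈ S are W = 0 and W = F. -/
/-!
The additive closure of `S` is the smallest `S`-stable additive subgroup containing `1`, so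
irreducibility forces it to be everything. Conversely, an `S`-stable additive subgroup containing
some `a ≠ 0` contains `x * a` for every `x` in the additive closure of `S`; if that closure is the
whole division ring, then so is the subgroup. Finally, additive subgroups of an `𝔽_p`-vector
space are exactly its `𝔽_p`-subspaces.
-/

namespace AddSubgroup

section Ring

variable {R : Type*} [Ring R] (S : Submonoid Rˣ)

theorem units_smul_mem_closure_units_image {s : Rˣ} (hs : s ∈ S) {x : R}
    (hx : x ∈ closure (Units.val '' (S : Set Rˣ))) :
    s • x ∈ closure (Units.val '' (S : Set Rˣ)) := by
  have hle : closure (Units.val '' (S : Set Rˣ)) ≤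
      (closure (Units.val '' (S : Set Rˣ))).comap (AddMonoidHom.mulLeft (s : R)) := by
    rw [closure_le]
    rintro _ ⟨t, ht, rfl⟩
    exact subset_closure ⟨s * t, S.mul_mem hs ht, rfl⟩
  exact hle hx

theorem mul_mem_of_mem_closure_units_image {A : AddSubgroup R}
    (hA : ∀ s ∈ S, ∀ a ∈ A, s • a ∈ A) {a : R} (ha : a ∈ A) {x : R}
    (hx : x ∈ closure (Units.val '' (S : Set Rˣ))) : x * a ∈ A := by
  have hle : closure (Units.val '' (S : Set Rˣ)) ≤ A.comap (AddMonoidHom.mulRight a) := by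
    rw [closure_le]
    rintro _ ⟨s, hs, rfl⟩
    exact hA s hs a ha
  exact hle hx

end Ring

theorem closure_units_image_eq_top_iff {D : Type*} [DivisionRing D] (S : Submonoid Dˣ) :
    closure (Units.val '' (S : Set Dˣ)) = ⊤ ↔
      ∀ A : AddSubgroup D, (∀ s ∈ S, ∀ a ∈ A, s • a ∈ A) → A = ⊥ ∨ A = ⊤ := by
  constructor
  · intro htop A hA
    obtain hbot | ⟨a, ha, ha0⟩ := A.bot_or_exists_ne_zero
    · exact .inl hbot
    refine .inr (eq_top_iff.2 fun y _ => ?_)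
    have hya := mul_mem_of_mem_closure_units_image S hA ha (htop ▸ mem_top (y * a⁻¹))
    rwa [inv_mul_cancel_right₀ ha0] at hya
  · intro h
    refine (h _ fun s hs x hx => units_smul_mem_closure_units_image S hs hx).resolve_left ?_
    exact ne_bot_iff_exists_ne_zero.2 ⟨⟨1, subset_closure ⟨1, S.one_mem, rfl⟩⟩, by simp⟩

end AddSubgroup

theorem addClosure_image_eq_top_iff_irreducible_general
    (p : ℕ)
    (F : Type) [Field F]
    [Module (ZMod p) F]
    (S : Subgroup Fˣ) :
    AddSubgroup.closure (Units.val '' (S : Set Fˣ)) = ⊤ ↔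
      ∀ W : Submodule (ZMod p) F,
        (∀ s ∈ S, ∀ w ∈ W, (s : Fˣ) • w ∈ W) → W = ⊥ ∨ W = ⊤ := by
  refine (AddSubgroup.closure_units_image_eq_top_iff S.toSubmonoid).trans ?_
  rw [← (AddSubgroup.toZModSubmodule p).forall_congr_right]
  simp only [Subgroup.mem_toSubmonoid, RelIso.coe_fn_toEquiv, AddSubgroup.mem_toZModSubmodule,
    map_eq_bot_iff, map_eq_top_iff]

/-- Let `p` be prime, `e ≥ 1`, `q = p^e`, `F` a finite field with `q`
elements, `n` a divisor of `q - 1`, and `S` the subgroup of order `n` of `Fˣ`.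
The additive subgroup of `F` generated by the image of `S` equals `F` if and only if
the only subspaces `W` of `F`, viewed as a vector space over its prime field `F_p`,
satisfying `s • W ⊆ W` for all `s ∈ S`, are `W = 0` and `W = F`
(i.e. `S` acts irreducibly on `F`). -/
theorem addClosure_image_eq_top_iff_irreducible
    (p e n : ℕ) (hp : p.Prime) (he : 1 ≤ e)
    (F : Type) [Field F] [Fintype F] (hq : Fintype.card F = p ^ e)
    [Module (ZMod p) F]
    (hn : n ∣ p ^ e - 1)
    (S : Subgroup Fˣ) (hS : Nat.card S = n) :
    AddSubgroup.closure (Units.val '' (S : Set Fˣ)) = ⊤ ↔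
      ∀ W : Submodule (ZMod p) F,
        (∀ s ∈ S, ∀ w ∈ W, (s : Fˣ) • w ∈ W) → W = ⊥ ∨ W = ⊤ :=
  addClosure_image_eq_top_iff_irreducible_general p F S
end

section
/- Assume (q, n) is admissible and (q − 1)/(p − 1) divides n. Fix a generator s of S, let d be the permutation v ↦ sv of F, let c be the Frobenius permutation v ↦ v^p of F, and let H_0 be the subgroup of the symmetric group on F generated by c and d (a group of order ne). Then every element of order n in H_0 is a power of d. -/
/-!
Conjugation by `c` raises `d` to the `p`-th power, so every element of `H₀` has the form
`g = d ^ i * c ^ j`, and `g ^ m = d ^ (i * N)` with `N = ∑ l < m, p ^ (j * l)` once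
`c ^ (j * m) = 1`.
If `c ^ j ≠ 1`, write `e = a * m` and `j = a * u` with `a = gcd e j`, so that `m ≥ 2` and `u` is
prime to `m`. The geometric sum `M = ∑ l < m, p ^ (a * l)` divides
`∑ k < e, p ^ k = (q - 1) / (p - 1)`, hence `n`, and it also divides `N` because `l ↦ u * l`
permutes the residues modulo `m`. Thus `g ^ (m * (n / M)) = 1`, so `M ∣ m`; but `M > m`.
-/

open Finset

theorem sum_range_pow_mul_eq_of_coprime {R : Type*} [Semiring R] {y : R} {m u : ℕ}
    (hy : y ^ m = 1) (hu : u.Coprime m) :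
    ∑ l ∈ range m, y ^ (u * l) = ∑ l ∈ range m, y ^ l := by
  have hmaps : Set.MapsTo (fun l ↦ u * l % m) (range m : Set ℕ) (range m : Set ℕ) :=
    fun l hl ↦ by
      simp only [coe_range, Set.mem_Iio] at hl ⊢
      exact Nat.mod_lt _ (by omega)
  have hinj : Set.InjOn (fun l ↦ u * l % m) (range m : Set ℕ) := fun a ha b hb hab ↦
    (Nat.ModEq.cancel_left_of_coprime (Nat.coprime_comm.mp hu) hab).eq_of_lt_of_lt
      (mem_range.mp ha) (mem_range.mp hb)
  calc ∑ l ∈ range m, y ^ (u * l) = ∑ l ∈ range m, y ^ (u * l % m) :=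
        sum_congr rfl fun l _ ↦ pow_eq_pow_mod _ hy
    _ = ∑ l ∈ range m, y ^ l :=
        sum_nbij _ hmaps hinj (surjOn_of_injOn_of_card_le _ hmaps hinj le_rfl) fun _ _ ↦ rfl

theorem geom_sum_dvd_geom_sum_pow_of_coprime (x : ℕ) {m u : ℕ} (hu : u.Coprime m) :
    ∑ l ∈ range m, x ^ l ∣ ∑ l ∈ range m, (x ^ u) ^ l := by
  set M := ∑ l ∈ range m, x ^ l
  have hM : ∑ l ∈ range m, (x : ZMod M) ^ l = 0 := by exact_mod_cast ZMod.natCast_self M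
  have hx : (x : ZMod M) ^ m = 1 := by rw [← sub_eq_zero, ← geom_sum_mul, hM, zero_mul]
  rw [← ZMod.natCast_eq_zero_iff]
  push_cast
  simp_rw [← pow_mul]
  rw [sum_range_pow_mul_eq_of_coprime hx hu, hM]

theorem geom_sum_range_mul {R : Type*} [CommSemiring R] (x : R) (a b : ℕ) :
    ∑ k ∈ range (a * b), x ^ k =
      (∑ t ∈ range a, x ^ t) * ∑ l ∈ range b, (x ^ a) ^ l := by
  induction b with
  | zero => simp
  | succ b ih =>
    rw [Nat.mul_succ, sum_range_add, ih, sum_range_succ, mul_add, ← pow_mul,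
      sum_mul _ _ (x ^ (a * b))]
    exact congrArg _ (sum_congr rfl fun t _ ↦ by rw [pow_add, mul_comm])

theorem lt_geom_sum {x m : ℕ} (hx : 2 ≤ x) (hm : 2 ≤ m) : m < ∑ l ∈ range m, x ^ l := by
  calc m = ∑ _l ∈ range m, 1 := by simp
    _ < ∑ l ∈ range m, x ^ l :=
        sum_lt_sum (fun l _ ↦ Nat.one_le_pow _ _ (by omega)) ⟨1, mem_range.mpr hm, by simpa⟩

section Metacyclic

variable {G : Type*} [Group G] {c d : G} {p : ℕ}

theorem pow_mul_pow_of_mul_eq_pow_mul (h : c * d = d ^ p * c) (a b : ℕ) :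
    c ^ b * d ^ a = d ^ (a * p ^ b) * c ^ b := by
  induction b with
  | zero => simp
  | succ b ih =>
    have hc : c * d ^ (a * p ^ b) = d ^ (a * p ^ (b + 1)) * c := by
      rw [(SemiconjBy.pow_right h _).eq, ← pow_mul, pow_succ]
      ring_nf
    rw [pow_succ', mul_assoc, ih, ← mul_assoc, hc, mul_assoc]

theorem pow_mul_pow_pow_of_mul_eq_pow_mul (h : c * d = d ^ p * c) (i j k : ℕ) :
    (d ^ i * c ^ j) ^ k = d ^ (i * ∑ l ∈ range k, p ^ (j * l)) * c ^ (j * k) := by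
  induction k with
  | zero => simp
  | succ k ih =>
    rw [pow_succ, ih, mul_assoc, ← mul_assoc (c ^ (j * k)), pow_mul_pow_of_mul_eq_pow_mul h,
      sum_range_succ, mul_add, Nat.mul_succ, pow_add, pow_add]
    simp only [mul_assoc]

theorem exists_eq_pow_mul_pow_of_mem_closure [Finite G] (h : c * d = d ^ p * c) {g : G}
    (hg : g ∈ Subgroup.closure {c, d}) : ∃ i j : ℕ, g = d ^ i * c ^ j := by
  rw [← Subgroup.mem_toSubmonoid, Subgroup.closure_toSubmonoid_of_finite] at hg
  induction hg using Submonoid.closure_induction with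
  | mem x hx =>
    rcases hx with rfl | rfl
    exacts [⟨0, 1, by simp⟩, ⟨1, 0, by simp⟩]
  | one => exact ⟨0, 0, by simp⟩
  | mul x y _ _ hx hy =>
    obtain ⟨i, j, rfl⟩ := hx
    obtain ⟨k, l, rfl⟩ := hy
    refine ⟨i + k * p ^ j, j + l, ?_⟩
    rw [mul_assoc, ← mul_assoc (c ^ j), pow_mul_pow_of_mul_eq_pow_mul h, pow_add, pow_add]
    group

theorem pow_eq_one_of_orderOf_pow_mul_pow [Finite G] (h : c * d = d ^ p * c) (hp : 2 ≤ p)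
    {e n : ℕ} (he : 0 < e) (hce : c ^ e = 1) (hdn : d ^ n = 1)
    (hn : ∑ k ∈ range e, p ^ k ∣ n) {i j : ℕ} (hg : orderOf (d ^ i * c ^ j) = n) :
    c ^ j = 1 := by
  by_contra hcj
  set a := e.gcd j
  have ha : 0 < a := Nat.gcd_pos_of_pos_left j he
  obtain ⟨m, hem⟩ : a ∣ e := Nat.gcd_dvd_left e j
  obtain ⟨u, hju⟩ : a ∣ j := Nat.gcd_dvd_right e j
  have hu : u.Coprime m := by
    refine Nat.eq_of_mul_eq_mul_left ha ?_
    rw [← Nat.gcd_mul_left, ← hem, ← hju, mul_one, Nat.gcd_comm]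
  have hm : 2 ≤ m := by
    by_contra! hm
    interval_cases m
    · omega
    · exact hcj (by rw [hju, ← mul_one a, ← hem, pow_mul, hce, one_pow])
  set M := ∑ l ∈ range m, (p ^ a) ^ l
  obtain ⟨n', hn'⟩ : M ∣ n :=
    (Dvd.intro_left _ (hem ▸ geom_sum_range_mul (p : ℕ) a m).symm).trans hn
  obtain ⟨N, hN⟩ : M ∣ ∑ l ∈ range m, p ^ (j * l) := by
    simpa only [hju, pow_mul] using geom_sum_dvd_geom_sum_pow_of_coprime (p ^ a) hu
  have hgm : (d ^ i * c ^ j) ^ (m * n') = 1 := by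
    have hjm : j * m = e * u := by rw [hem, hju]; ring
    have hiN : i * (M * N) * n' = n * (i * N) := by rw [hn']; ring
    rw [pow_mul, pow_mul_pow_pow_of_mul_eq_pow_mul h, hN, hjm, pow_mul c, hce, one_pow, mul_one,
      ← pow_mul, hiN, pow_mul, hdn, one_pow]
  have hn'0 : 0 < n' := Nat.pos_of_mul_pos_left (hn' ▸ hg ▸ orderOf_pos _)
  have hMm : M ≤ m := Nat.le_of_dvd (by omega)
    (Nat.dvd_of_mul_dvd_mul_right hn'0 (hn' ▸ hg ▸ orderOf_dvd_of_pow_eq_one hgm))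
  exact hMm.not_gt (lt_geom_sum (hp.trans (Nat.le_self_pow ha.ne' p)) hm)

end Metacyclic

theorem order_n_elements_of_H0_are_powers_of_d_general
    (p e n : ℕ) (hp : p.Prime) (he : 1 ≤ e)
    (F : Type) [Field F] [Fintype F] (hq : Fintype.card F = p ^ e)
    (S : Subgroup Fˣ) (hS : Nat.card S = n)
    (hdvd : (p ^ e - 1) / (p - 1) ∣ n)
    (s : Fˣ) (hs : Subgroup.zpowers s = S)
    (c d : Equiv.Perm F)
    (hc : ∀ v : F, c v = v ^ p)
    (hd : ∀ v : F, d v = (s : F) * v) :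
    ∀ g ∈ Subgroup.closure ({c, d} : Set (Equiv.Perm F)),
      orderOf g = n → ∃ k : ℕ, g = d ^ k := by
  intro g hg hgn
  have hd_eq : d = MulAction.toPermHom Fˣ F s := Equiv.ext hd
  have hdn : d ^ n = 1 := by
    rw [hd_eq, ← map_pow, ← hS, ← hs, Nat.card_zpowers, pow_orderOf_eq_one, map_one]
  have hce : c ^ e = 1 := by
    have hc_eq : ⇑c = (· ^ p) := funext hc
    ext v
    rw [Equiv.Perm.coe_pow, hc_eq, pow_iterate, ← hq]
    exact FiniteField.pow_card v
  have hcd : c * d = d ^ p * c := by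
    rw [hd_eq, ← map_pow]
    ext v
    simp [hc, Units.smul_def, mul_pow]
  obtain ⟨i, j, rfl⟩ := exists_eq_pow_mul_pow_of_mem_closure hcd hg
  refine ⟨i, ?_⟩
  rw [pow_eq_one_of_orderOf_pow_mul_pow hcd hp.two_le he hce hdn
    (by rwa [Nat.geomSum_eq hp.two_le]) hgn, mul_one]

/-- Let `p` be prime, `e ≥ 1`, `q = p^e`, `F` a finite field with `q`
elements, `n` a divisor of `q - 1` (even if `p` is odd), and `S` the subgroup of order
`n` of `Fˣ`.  Assume `(q, n)` is admissible (i.e. `e` is the least `i ≥ 1` with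
`p^i ≡ 1 (mod n)`) and that `(q - 1)/(p - 1)` divides `n`.  Fix a generator `s` of `S`,
let `d : v ↦ s v` and `c : v ↦ v^p` be the corresponding permutations of `F`, and let
`H₀` be the subgroup of the symmetric group on `F` generated by `c` and `d`.  Then every
element of order `n` in `H₀` is a power of `d`. -/
theorem order_n_elements_of_H0_are_powers_of_d
    (p e n : ℕ) (hp : p.Prime) (he : 1 ≤ e)
    (F : Type) [Field F] [Fintype F] (hq : Fintype.card F = p ^ e)
    (hn : n ∣ p ^ e - 1) (hpar : Odd p → Even n)
    (S : Subgroup Fˣ) (hS : Nat.card S = n)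
    (hadm : IsLeast {i : ℕ | 1 ≤ i ∧ p ^ i ≡ 1 [MOD n]} e)
    (hdvd : (p ^ e - 1) / (p - 1) ∣ n)
    (s : Fˣ) (hs : Subgroup.zpowers s = S)
    (c d : Equiv.Perm F)
    (hc : ∀ v : F, c v = v ^ p)
    (hd : ∀ v : F, d v = (s : F) * v) :
    ∀ g ∈ Subgroup.closure ({c, d} : Set (Equiv.Perm F)),
      orderOf g = n → ∃ k : ℕ, g = d ^ k :=
  order_n_elements_of_H0_are_powers_of_d_general p e n hp he F hq S hS hdvd s hs c d hc hd
end

section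
/- Assume p = 2, (q, n) is admissible, and n > 1. If x ∈ AGL_1^{(n)}(q) has order n and y ∈ AGL_1^{(n)}(q) is a nontrivial translation v ↦ v + b with b ≠ 0, then x and y generate AGL_1^{(n)}(q). -/
/-!
Write `x = (v ↦ a v + c)`. The power `x ^ orderOf a` is a translation, so its order divides
`q`; since `n` is prime to `q`, the multiplier `a` has order `n` and therefore generates `S`.
The translations `v ↦ v + t` lying in `G = ⟨x, y⟩` form an additive subgroup `V ∋ b`, and `V`
is stable under multiplication by `a` because `x` conjugates `v ↦ v + t` to `v ↦ v + a t`.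
The `r` with `r V ⊆ V` form a subfield containing `a`; it has `p ^ d` elements with
`n ∣ p ^ d - 1`, so admissibility makes it all of `F`, and `b ∈ V` gives `V = F`. Finally every
`v ↦ a ^ k v + b'` is a translation composed with `x ^ k`.
-/

open Equiv

variable {R : Type*}

theorem Equiv.Perm.pow_apply_of_affine [Ring R] {x : Perm R} {a c : R}
    (hx : ∀ v, x v = a * v + c) (k : ℕ) (v : R) : (x ^ k) v = a ^ k * v + (x ^ k) 0 := by
  induction k generalizing v with
  | zero => simp
  | succ k ih =>
    rw [pow_succ', Perm.mul_apply, Perm.mul_apply, ih v, ih 0, hx, hx, pow_succ']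
    noncomm_ring

theorem Equiv.Perm.eq_addRight_mul_of_affine [Ring R] {g h : Perm R} {a b c : R}
    (hg : ∀ v, g v = a * v + b) (hh : ∀ v, h v = a * v + c) :
    g = Equiv.addRight (b - c) * h := by
  ext v
  simp [hg, hh]

theorem Equiv.Perm.mul_addRight_of_affine [Ring R] {x : Perm R} {a c : R}
    (hx : ∀ v, x v = a * v + c) (t : R) :
    x * Equiv.addRight t = Equiv.addRight (a * t) * x := by
  ext v
  simp [hx, mul_add, add_right_comm]

theorem Equiv.Perm.orderOf_eq_orderOf_of_affine [Ring R] [Fintype R] {x : Perm R} {a c : R}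
    (hx : ∀ v, x v = a * v + c) (hcop : (orderOf x).Coprime (Fintype.card R)) :
    orderOf a = orderOf x := by
  have hpow := Perm.pow_apply_of_affine hx
  apply Nat.dvd_antisymm
  · apply orderOf_dvd_of_pow_eq_one
    simpa [pow_orderOf_eq_one] using (hpow (orderOf x) 1).symm
  · have htrans : x ^ orderOf a = Equiv.addRight ((x ^ orderOf a) 0) := by
      ext v
      rw [hpow, pow_orderOf_eq_one, one_mul]
      rfl
    refine hcop.dvd_of_dvd_mul_right (orderOf_dvd_of_pow_eq_one ?_)
    -- a translation has order dividing `card R`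
    rw [pow_mul, htrans, nsmul_addRight, card_nsmul_eq_zero, addRight_zero]

def Subgroup.translations [AddGroup R] (G : Subgroup (Perm R)) : AddSubgroup R where
  carrier := {t | Equiv.addRight t ∈ G}
  add_mem' {s t} hs ht := show Equiv.addRight (s + t) ∈ G from
    (addRight_add s t).symm ▸ G.mul_mem ht hs
  zero_mem' := show Equiv.addRight 0 ∈ G from addRight_zero (α := R) ▸ G.one_mem
  neg_mem' {t} ht := show Equiv.addRight (-t) ∈ G from neg_addRight t ▸ G.inv_mem ht

theorem Subgroup.mem_translations [AddGroup R] {G : Subgroup (Perm R)} {t : R} :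
    t ∈ G.translations ↔ Equiv.addRight t ∈ G :=
  Iff.rfl

variable [Field R]

def AddSubgroup.mulStabilizer [Finite R] (V : AddSubgroup R) : Subfield R :=
  let S : Subring R :=
    { carrier := {r | ∀ t ∈ V, r * t ∈ V}
      mul_mem' := fun {r s} hr hs t ht => mul_assoc r s t ▸ hr _ (hs t ht)
      one_mem' := fun t ht => (one_mul t).symm ▸ ht
      add_mem' := fun {r s} hr hs t ht => (add_mul r s t).symm ▸ V.add_mem (hr t ht) (hs t ht)
      zero_mem' := fun t _ => (zero_mul t).symm ▸ V.zero_mem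
      neg_mem' := fun {r} hr t ht => (neg_mul r t).symm ▸ V.neg_mem (hr t ht) }
  S.toSubfield fun r hr => by
    rcases eq_or_ne r 0 with rfl | hr0
    · simp
    -- in the finite group `Rˣ` the inverse is a positive power
    obtain ⟨k, hk⟩ := mem_powers_iff_mem_zpowers.2
      (inv_mem (Subgroup.mem_zpowers (Units.mk0 r hr0)))
    have hinv : r⁻¹ = r ^ k := by simpa using congrArg Units.val hk.symm
    exact hinv ▸ pow_mem hr k

theorem AddSubgroup.mem_mulStabilizer [Finite R] {V : AddSubgroup R} {r : R} :
    r ∈ V.mulStabilizer ↔ ∀ t ∈ V, r * t ∈ V :=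
  Iff.rfl

theorem AddSubgroup.eq_top_of_mulStabilizer_eq_top [Finite R] {V : AddSubgroup R}
    (hV : V.mulStabilizer = ⊤) {b : R} (hbV : b ∈ V) (hb : b ≠ 0) : V = ⊤ := by
  refine (eq_top_iff' V).2 fun t => ?_
  have h := mem_mulStabilizer.1 (hV ▸ Subfield.mem_top (t * b⁻¹)) b hbV
  rwa [inv_mul_cancel_right₀ hb] at h

theorem Subgroup.mem_mulStabilizer_translations [Finite R] {G : Subgroup (Perm R)}
    {x : Perm R} (hxG : x ∈ G) {a c : R} (hx : ∀ v, x v = a * v + c) :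
    a ∈ G.translations.mulStabilizer := by
  refine AddSubgroup.mem_mulStabilizer.2 fun t ht => mem_translations.2 ?_
  have hconj : Equiv.addRight (a * t) = x * Equiv.addRight t * x⁻¹ := by
    rw [Perm.mul_addRight_of_affine hx, mul_inv_cancel_right]
  rw [hconj]
  exact G.mul_mem (G.mul_mem hxG ht) (G.inv_mem hxG)

theorem Subfield.eq_top_of_mem_of_isLeast_pow_modEq [Fintype R] {p e : ℕ} (hp : p.Prime)
    (hq : Fintype.card R = p ^ e) {a : Rˣ}
    (hadm : IsLeast {i : ℕ | 1 ≤ i ∧ p ^ i ≡ 1 [MOD orderOf a]} e)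
    (K : Subfield R) (ha : (a : R) ∈ K) : K = ⊤ := by
  obtain ⟨d, hde, hKd⟩ : ∃ d ≤ e, Nat.card K = p ^ d := by
    rw [← Nat.dvd_prime_pow hp, ← hq, ← Nat.card_eq_fintype_card]
    exact K.toAddSubgroup.card_addSubgroup_dvd_card
  have hd : 1 ≤ d := by
    have h := Finite.one_lt_card (α := K)
    rw [hKd] at h
    exact Nat.pos_of_ne_zero (by rintro rfl; simp at h)
  have hdvd : orderOf a ∣ p ^ d - 1 := by
    apply orderOf_dvd_of_pow_eq_one
    have h := congrArg (fun w : Kˣ => ((w : K) : R))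
      (pow_card_eq_one' (x := Units.mk0 ⟨a, ha⟩ fun h => a.ne_zero (congrArg Subtype.val h)))
    ext
    simpa [Nat.card_units, hKd] using h
  have hed : e ≤ d :=
    hadm.2 ⟨hd, ((Nat.modEq_iff_dvd' (Nat.one_le_pow _ _ hp.pos)).2 hdvd).symm⟩
  have hcard : Nat.card K.toAddSubgroup = Nat.card R := by
    rw [Nat.card_eq_fintype_card (α := R), hq, ← le_antisymm hde hed]
    exact hKd
  have htop := K.toAddSubgroup.eq_top_of_card_eq hcard
  exact eq_top_iff.2 fun r _ => (AddSubgroup.eq_top_iff' _).1 htop r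

theorem AGL_generated_by_order_n_and_translation_general
    (p e n : ℕ) (hp : p.Prime)
    (F : Type) [Field F] [Fintype F] (hq : Fintype.card F = p ^ e)
    (S : Subgroup Fˣ) (hS : Nat.card S = n)
    (hadm : IsLeast {i : ℕ | 1 ≤ i ∧ p ^ i ≡ 1 [MOD n]} e)
    (A : Subgroup (Equiv.Perm F))
    (hA : ∀ g : Equiv.Perm F,
      g ∈ A ↔ ∃ a ∈ S, ∃ b : F, ∀ v : F, g v = (a : F) * v + b)
    (x y : Equiv.Perm F) (hx : x ∈ A) (hxo : orderOf x = n)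
    (hyA : y ∈ A) (b : F) (hb : b ≠ 0) (hy : ∀ v : F, y v = v + b) :
    Subgroup.closure ({x, y} : Set (Equiv.Perm F)) = A := by
  set G := Subgroup.closure ({x, y} : Set (Equiv.Perm F))
  have hxG : x ∈ G := Subgroup.subset_closure (Set.mem_insert _ _)
  have hyG : y ∈ G := Subgroup.subset_closure (Set.mem_insert_of_mem _ rfl)
  obtain ⟨a, haS, c, hxa⟩ := (hA x).1 hx
  have hcop : n.Coprime (Fintype.card F) := by
    rw [hq, Nat.coprime_comm, Nat.Coprime, hadm.1.2.gcd_eq, Nat.gcd_one_left]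
  have hord : orderOf a = n := by
    rw [← orderOf_units, Perm.orderOf_eq_orderOf_of_affine hxa (hxo ▸ hcop), hxo]
  have hSa : Subgroup.zpowers a = S :=
    Subgroup.eq_of_le_of_card_ge (Subgroup.zpowers_le.2 haS) (by rw [Nat.card_zpowers, hord, hS])
  have hyb : y = Equiv.addRight b := Equiv.ext hy
  have htrans : G.translations = ⊤ :=
    AddSubgroup.eq_top_of_mulStabilizer_eq_top
      (Subfield.eq_top_of_mem_of_isLeast_pow_modEq hp hq (hord ▸ hadm) _
        (Subgroup.mem_mulStabilizer_translations hxG hxa))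
      (Subgroup.mem_translations.2 (hyb ▸ hyG)) hb
  refine le_antisymm ((Subgroup.closure_le A).2 (Set.insert_subset hx (by simpa using hyA))) ?_
  intro g hg
  obtain ⟨a', ha'S, b', hga'⟩ := (hA g).1 hg
  obtain ⟨k, rfl⟩ := mem_powers_iff_mem_zpowers.2 (hSa ▸ ha'S)
  have hg : ∀ v, g v = (a : F) ^ k * v + b' := by simpa using hga'
  rw [Perm.eq_addRight_mul_of_affine hg (Perm.pow_apply_of_affine hxa k)]
  exact G.mul_mem (Subgroup.mem_translations.1 (htrans ▸ AddSubgroup.mem_top _)) (G.pow_mem hxG k)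

/-- Let `p = 2`, `e ≥ 1`, `q = p^e`, `F` a finite field with `q`
elements, `n` a divisor of `q - 1`, and `S` the subgroup of order `n` of `Fˣ`.  Assume
`(q, n)` is admissible and `n > 1`, and let `A = AGL₁⁽ⁿ⁾(q)` be the subgroup of
`Perm F` of affine maps `v ↦ a v + b` with `a ∈ S`, `b ∈ F`.  If `x ∈ A` has order `n`
and `y ∈ A` is a nontrivial translation `v ↦ v + b` with `b ≠ 0`, then `x` and `y`
generate `A`. -/
theorem AGL_generated_by_order_n_and_translation
    (p e n : ℕ) (hp : p.Prime) (hp2 : p = 2) (he : 1 ≤ e)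
    (F : Type) [Field F] [Fintype F] (hq : Fintype.card F = p ^ e)
    (hn : n ∣ p ^ e - 1)
    (S : Subgroup Fˣ) (hS : Nat.card S = n)
    (hadm : IsLeast {i : ℕ | 1 ≤ i ∧ p ^ i ≡ 1 [MOD n]} e)
    (hn1 : 1 < n)
    (A : Subgroup (Equiv.Perm F))
    (hA : ∀ g : Equiv.Perm F,
      g ∈ A ↔ ∃ a ∈ S, ∃ b : F, ∀ v : F, g v = (a : F) * v + b)
    (x y : Equiv.Perm F) (hx : x ∈ A) (hxo : orderOf x = n)
    (hyA : y ∈ A) (b : F) (hb : b ≠ 0) (hy : ∀ v : F, y v = v + b) :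
    Subgroup.closure ({x, y} : Set (Equiv.Perm F)) = A :=
  AGL_generated_by_order_n_and_translation_general p e n hp F hq S hS hadm A hA x y hx hxo hyA b hb
    hy
end

section
/- Assume (q, n) is admissible and n > 1. Then the number of ordered pairs (x, y) of elements of AGL_1^{(n)}(q) such that x has order n, y has order 2, and x and y together generate AGL_1^{(n)}(q), is φ(n)·q·(q − 1), where φ is Euler's totient function. -/
/-!
An element `v ↦ a v + b` of `AGL₁⁽ⁿ⁾(q)` of order `n` has `a` of order `n`, since translations
have order dividing `p` and `n` is prime to `p`; so `a` generates `S`, and by admissibility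
`a` generates `F` as a ring. An involution is `v ↦ -v + c`. The commutator of `x = (a, b)` and
`y = (-1, c)` is the translation by `d = (a - 1) c + 2 b`. If `d ≠ 0`, conjugating it by powers
of `x` yields the translations by `ℤ[a] d = F`, so `x` and `y` generate; if `d = 0`, both fix
`b / (1 - a)`. Hence generating pairs correspond to triples `(a, b, d)` with `d ≠ 0`.
-/

open Equiv

lemma AddSubgroup.mul_mem_of_mem_closure_singleton {R : Type*} [Ring R] (M : AddSubgroup R)
    {a r s : R} (ha : ∀ s ∈ M, a * s ∈ M) (hr : r ∈ Subring.closure {a}) (hs : s ∈ M) :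
    r * s ∈ M := by
  induction hr using Subring.closure_induction generalizing s with
  | mem x hx => rw [Set.mem_singleton_iff.1 hx]; exact ha s hs
  | zero => simp
  | one => simpa using hs
  | add x y _ _ hx hy => simpa only [add_mul] using M.add_mem (hx hs) (hy hs)
  | neg x _ hx => simpa only [neg_mul] using M.neg_mem (hx hs)
  | mul x y _ _ hx hy => simpa only [mul_assoc] using hx (hy hs)

lemma Subgroup.neg_one_mem_of_even_card {R : Type*} [CommRing R] [IsDomain R] (S : Subgroup Rˣ)
    [Finite S] (h : Even (Nat.card S)) : -1 ∈ S := by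
  obtain ⟨u, hu⟩ := exists_prime_orderOf_dvd_card' (G := S) 2 h.two_dvd
  rw [← Subgroup.orderOf_coe, ← IsPrimitiveRoot.iff_orderOf, ← IsPrimitiveRoot.coe_units_iff] at hu
  have : (u : Rˣ) = -1 := Units.ext (by simpa using hu.eq_neg_one_of_two_right)
  exact this ▸ u.2

lemma Subgroup.ncard_setOf_orderOf_eq_totient {G : Type*} [Group G] (S : Subgroup G)
    [IsCyclic S] [Finite S] {d : ℕ} (hd : d ∣ Nat.card S) :
    {a | a ∈ S ∧ orderOf a = d}.ncard = d.totient := by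
  classical
  have : Fintype S := Fintype.ofFinite S
  have himage : {a | a ∈ S ∧ orderOf a = d} = Subtype.val '' {u : S | orderOf u = d} := by
    ext a
    simp [and_comm]
  rw [himage, Set.ncard_image_of_injective _ Subtype.val_injective, Set.ncard_eq_toFinset_card',
    Set.toFinset_ofPred]
  exact IsCyclic.card_orderOf_eq_totient (Nat.card_eq_fintype_card (α := S) ▸ hd)

lemma FiniteField.subring_closure_eq_top {F : Type*} [Field F] [Fintype F] {p e : ℕ}
    (hp : p.Prime) (hq : Fintype.card F = p ^ e) (a : Fˣ)
    (he : ∀ i, 1 ≤ i → p ^ i ≡ 1 [MOD orderOf a] → e ≤ i) :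
    Subring.closure {(a : F)} = ⊤ := by
  classical
  set E := Subring.closure {(a : F)}
  have hq' : Nat.card F = p ^ e := Nat.card_eq_fintype_card.trans hq
  let : Fintype E := Fintype.ofFinite E
  let : Field E := Fintype.fieldOfDomain E
  obtain ⟨f, hfe, hE⟩ : ∃ f ≤ e, Nat.card E = p ^ f :=
    (Nat.dvd_prime_pow hp).1 (hq' ▸ AddSubgroup.card_addSubgroup_dvd_card E.toAddSubgroup)
  have hf : 1 ≤ f := by
    refine Nat.one_le_iff_ne_zero.2 fun hf0 => ?_
    obtain ⟨hsub, -⟩ := Nat.card_eq_one_iff_unique.1 (hf0 ▸ hE)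
    exact zero_ne_one (@Subsingleton.elim E hsub 0 1)
  have hpow : (a : F) ^ p ^ f = a := by
    have := congrArg Subtype.val (FiniteField.pow_card (⟨a, Subring.subset_closure rfl⟩ : E))
    simpa [← Nat.card_eq_fintype_card, hE] using this
  have hdvd : orderOf a ∣ p ^ f - 1 := by
    refine orderOf_dvd_of_pow_eq_one (Units.ext (mul_left_cancel₀ a.ne_zero ?_))
    rw [Units.val_pow_eq_pow_val, ← pow_succ', Nat.sub_add_cancel (Nat.one_le_pow _ _ hp.pos),
      hpow, Units.val_one, mul_one]
  have hef : e ≤ f := he f hf ((Nat.modEq_iff_dvd' (Nat.one_le_pow _ _ hp.pos)).2 hdvd).symm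
  refine Subring.toAddSubgroup_injective (AddSubgroup.eq_top_of_card_eq _ ?_)
  rw [hq', ← le_antisymm hfe hef, ← hE]
  rfl

lemma FiniteField.natCast_card_subgroup_units_ne_zero {F : Type*} [Field F] [Fintype F]
    (S : Subgroup Fˣ) : (Nat.card S : F) ≠ 0 := by
  obtain ⟨k, hk⟩ := Subgroup.card_subgroup_dvd_card S
  have hunits : (Nat.card Fˣ : F) = -1 := by
    rw [Nat.card_units, Nat.cast_sub Nat.card_pos, Nat.card_eq_fintype_card,
      FiniteField.cast_card_eq_zero, Nat.cast_one, zero_sub]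
  intro h
  rw [hk, Nat.cast_mul, h, zero_mul] at hunits
  exact zero_ne_one (neg_eq_zero.1 hunits.symm).symm

lemma ncard_setOf_sub_one_mul_add_two_mul_ne_zero {K : Type*} [Field K] [Finite K] {G : Set Kˣ}
    (hG : 1 ∉ G) :
    {t : Kˣ × K × K | t.1 ∈ G ∧ ((t.1 : K) - 1) * t.2.2 + 2 * t.2.1 ≠ 0}.ncard =
      G.ncard * Nat.card K * (Nat.card K - 1) := by
  have hG' : ∀ a ∈ G, (a : K) - 1 ≠ 0 := fun a ha =>
    sub_ne_zero.2 (Units.val_eq_one.not.2 (ne_of_mem_of_not_mem ha hG))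
  have hbij : Set.BijOn (fun t : Kˣ × K × K => (t.1, t.2.1, ((t.1 : K) - 1) * t.2.2 + 2 * t.2.1))
      {t | t.1 ∈ G ∧ ((t.1 : K) - 1) * t.2.2 + 2 * t.2.1 ≠ 0} (G ×ˢ Set.univ ×ˢ {0}ᶜ) := by
    refine ⟨fun t ht => ⟨ht.1, trivial, ht.2⟩, ?_, ?_⟩
    · rintro ⟨a, b, c⟩ ⟨ha, -⟩ ⟨a', b', c'⟩ - h
      simp only [Prod.mk.injEq] at h
      obtain ⟨rfl, rfl, h⟩ := h
      simpa [hG' a ha] using h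
    · rintro ⟨a, b, u⟩ ⟨ha, -, hu : u ≠ 0⟩
      refine ⟨(a, b, ((a : K) - 1)⁻¹ * (u - 2 * b)), ?_, ?_⟩ <;>
        simp [ha, hG' a ha, hu]
  rw [hbij.ncard_eq, Set.ncard_prod, Set.ncard_prod, Set.ncard_univ, Set.ncard_compl,
    Set.ncard_singleton, mul_assoc]

section Affine

variable {K : Type*} [Field K]

def affinePerm (a : Kˣ) (b : K) : Perm K where
  toFun v := a * v + b
  invFun v := a⁻¹ * (v - b)
  left_inv v := by simp
  right_inv v := by simp

@[simp]
lemma affinePerm_apply (a : Kˣ) (b v : K) : affinePerm a b v = a * v + b := rfl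

lemma affinePerm_mul (a a' : Kˣ) (b b' : K) :
    affinePerm a b * affinePerm a' b' = affinePerm (a * a') (a * b' + b) := by
  ext v
  simp only [Perm.mul_apply, affinePerm_apply, Units.val_mul]
  ring

@[simp]
lemma affinePerm_one_zero : affinePerm (1 : Kˣ) (0 : K) = 1 := by
  ext v
  simp

lemma affinePerm_inv (a : Kˣ) (b : K) :
    (affinePerm a b)⁻¹ = affinePerm a⁻¹ (-(a⁻¹ * b)) := by
  refine (eq_inv_of_mul_eq_one_left ?_).symm
  simp [affinePerm_mul]

lemma affinePerm_inj {a a' : Kˣ} {b b' : K} :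
    affinePerm a b = affinePerm a' b' ↔ a = a' ∧ b = b' := by
  refine ⟨fun h => ?_, fun h => h.1 ▸ h.2 ▸ rfl⟩
  have h0 := DFunLike.congr_fun h 0
  have h1 := DFunLike.congr_fun h 1
  simp only [affinePerm_apply, mul_zero, zero_add, mul_one] at h0 h1
  exact ⟨Units.ext (by simpa [h0] using h1), h0⟩

lemma affinePerm_zero (a : Kˣ) : affinePerm a 0 = MulAction.toPermHom Kˣ K a := by
  ext v
  simp [Units.smul_def]

lemma affinePerm_eq_one_mul_zero (a : Kˣ) (b : K) :
    affinePerm a b = affinePerm 1 b * affinePerm a 0 := by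
  simp [affinePerm_mul]

lemma Units.one_sub_val_ne_zero {a : Kˣ} (ha : a ≠ 1) : (1 : K) - a ≠ 0 :=
  sub_ne_zero.2 fun h => ha (Units.val_eq_one.1 h.symm)

lemma affinePerm_apply_fixedPoint {a : Kˣ} (ha : a ≠ 1) (b : K) :
    affinePerm a b (b / (1 - a)) = b / (1 - a) := by
  have := Units.one_sub_val_ne_zero ha
  simp only [affinePerm_apply]
  field_simp
  ring

lemma semiconjBy_affinePerm_zero {a : Kˣ} (ha : a ≠ 1) (b : K) :
    SemiconjBy (affinePerm 1 (b / (1 - a))) (affinePerm a 0) (affinePerm a b) := by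
  have := Units.one_sub_val_ne_zero ha
  simp only [SemiconjBy, affinePerm_mul, affinePerm_inj, Units.val_one]
  refine ⟨by simp, ?_⟩
  field_simp
  ring

lemma orderOf_affinePerm {a : Kˣ} (ha : a ≠ 1) (b : K) :
    orderOf (affinePerm a b) = orderOf a := by
  rw [← (semiconjBy_affinePerm_zero ha b).orderOf_eq, affinePerm_zero,
    orderOf_injective _ MulAction.toPerm_injective]

lemma orderOf_affinePerm_eq_two_iff {a : Kˣ} {c : K} :
    orderOf (affinePerm a c) = 2 ↔ a = -1 ∧ affinePerm a c ≠ 1 := by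
  have hsq : affinePerm a c ^ 2 = affinePerm (a * a) ((a + 1) * c) := by
    rw [sq, affinePerm_mul]
    ring_nf
  constructor
  · intro h
    refine ⟨Units.ext ?_, fun h1 => by simp [h1] at h⟩
    have h2 := pow_orderOf_eq_one (affinePerm a c)
    rw [h, hsq, ← affinePerm_one_zero, affinePerm_inj, Units.ext_iff, Units.val_mul,
      Units.val_one, mul_self_eq_one_iff] at h2
    obtain ⟨ha | ha, hc⟩ := h2
    · have hc0 : c ≠ 0 := by
        rintro rfl
        simp [show a = 1 from Units.ext ha] at h
      have h2 : (2 : K) = 0 := by simpa [ha, hc0, one_add_one_eq_two] using hc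
      rw [ha, Units.val_neg, Units.val_one]
      linear_combination h2
    · simpa using ha
  · rintro ⟨rfl, h1⟩
    exact orderOf_eq_prime (by simp [hsq]) h1

def affineSubgroup (S : Subgroup Kˣ) : Subgroup (Perm K) where
  carrier := {g | ∃ a ∈ S, ∃ b, g = affinePerm a b}
  mul_mem' := by
    rintro _ _ ⟨a, ha, b, rfl⟩ ⟨a', ha', b', rfl⟩
    exact ⟨_, S.mul_mem ha ha', _, affinePerm_mul a a' b b'⟩
  one_mem' := ⟨1, S.one_mem, 0, affinePerm_one_zero.symm⟩
  inv_mem' := by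
    rintro _ ⟨a, ha, b, rfl⟩
    exact ⟨_, S.inv_mem ha, _, affinePerm_inv a b⟩

lemma mem_affineSubgroup {S : Subgroup Kˣ} {g : Perm K} :
    g ∈ affineSubgroup S ↔ ∃ a ∈ S, ∃ b, g = affinePerm a b :=
  Iff.rfl

def translationSubgroup (H : Subgroup (Perm K)) : AddSubgroup K where
  carrier := {s | affinePerm 1 s ∈ H}
  add_mem' {s t} hs ht := by
    simpa [affinePerm_mul, add_comm] using H.mul_mem hs ht
  zero_mem' := by simp [H.one_mem]
  neg_mem' {s} hs := by simpa [affinePerm_inv] using H.inv_mem hs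

lemma mem_translationSubgroup {H : Subgroup (Perm K)} {s : K} :
    s ∈ translationSubgroup H ↔ affinePerm 1 s ∈ H :=
  Iff.rfl

lemma translationSubgroup_eq_top {H : Subgroup (Perm K)} {a : Kˣ} {b d : K}
    (hx : affinePerm a b ∈ H) (htop : Subring.closure {(a : K)} = ⊤)
    (hd : affinePerm 1 d ∈ H) (hd0 : d ≠ 0) : translationSubgroup H = ⊤ := by
  have hstable : ∀ s ∈ translationSubgroup H, (a : K) * s ∈ translationSubgroup H := by
    intro s hs
    have hconj : affinePerm a b * affinePerm 1 s * (affinePerm a b)⁻¹ = affinePerm 1 (a * s) := by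
      simp [affinePerm_inv, affinePerm_mul]
    rw [mem_translationSubgroup, ← hconj]
    exact H.mul_mem (H.mul_mem hx hs) (H.inv_mem hx)
  refine eq_top_iff.2 fun s _ => ?_
  have := (translationSubgroup H).mul_mem_of_mem_closure_singleton hstable
    (htop ▸ Subring.mem_top (s / d)) hd
  rwa [div_mul_cancel₀ s hd0] at this

lemma closure_affinePerm_pair_eq_affineSubgroup {S : Subgroup Kˣ} {a : Kˣ} {b c : K}
    (hS : Subgroup.zpowers a = S) (hneg : -1 ∈ S) (htop : Subring.closure {(a : K)} = ⊤)
    (hd : (a - 1) * c + 2 * b ≠ 0) :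
    Subgroup.closure {affinePerm a b, affinePerm (-1) c} = affineSubgroup S := by
  set H := Subgroup.closure {affinePerm a b, affinePerm (-1) c}
  refine le_antisymm ?_ ?_
  · rw [Subgroup.closure_le, Set.insert_subset_iff, Set.singleton_subset_iff]
    exact ⟨⟨a, hS ▸ Subgroup.mem_zpowers a, b, rfl⟩, ⟨-1, hneg, c, rfl⟩⟩
  have hx : affinePerm a b ∈ H := Subgroup.subset_closure (by simp)
  have hy : affinePerm (-1) c ∈ H := Subgroup.subset_closure (by simp)
  have hcomm : affinePerm a b * affinePerm (-1) c * (affinePerm a b)⁻¹ * affinePerm (-1) c =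
      affinePerm 1 ((a - 1) * c + 2 * b) := by
    ext v
    simp [affinePerm_inv]
    field_simp
    ring
  have htrans : ∀ s, affinePerm 1 s ∈ H := (AddSubgroup.eq_top_iff' _).1 <|
    translationSubgroup_eq_top hx htop
      (hcomm ▸ H.mul_mem (H.mul_mem (H.mul_mem hx hy) (H.inv_mem hx)) hy) hd
  have hscale : affinePerm a 0 ∈ H := by
    rw [show affinePerm a 0 = affinePerm 1 (-b) * affinePerm a b by simp [affinePerm_mul]]
    exact H.mul_mem (htrans (-b)) hx
  rintro _ ⟨_, ha', b', rfl⟩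
  obtain ⟨k, rfl⟩ := Subgroup.mem_zpowers_iff.1 (hS ▸ ha')
  rw [affinePerm_eq_one_mul_zero, affinePerm_zero, map_zpow, ← affinePerm_zero]
  exact H.mul_mem (htrans b') (H.zpow_mem hscale k)

lemma affinePerm_one_one_notMem_closure {a : Kˣ} {b c : K} (ha : a ≠ 1)
    (hd : (a - 1) * c + 2 * b = 0) :
    affinePerm 1 1 ∉ Subgroup.closure {affinePerm a b, affinePerm (-1) c} := by
  have hc : c = 2 * (b / (1 - a)) := by
    have := Units.one_sub_val_ne_zero ha
    field_simp
    linear_combination -hd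
  have hfix : Subgroup.closure {affinePerm a b, affinePerm (-1) c} ≤
      MulAction.stabilizer (Perm K) (b / (1 - a)) := by
    rw [Subgroup.closure_le, Set.insert_subset_iff, Set.singleton_subset_iff]
    refine ⟨affinePerm_apply_fixedPoint ha b, ?_⟩
    simp [MulAction.mem_stabilizer_iff, hc]
    ring
  intro h
  simpa using hfix h

lemma closure_affinePerm_pair_eq_affineSubgroup_iff {S : Subgroup Kˣ} {a : Kˣ} {b c : K}
    (hS : Subgroup.zpowers a = S) (hneg : -1 ∈ S) (htop : Subring.closure {(a : K)} = ⊤)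
    (ha : a ≠ 1) :
    Subgroup.closure {affinePerm a b, affinePerm (-1) c} = affineSubgroup S ↔
      (a - 1) * c + 2 * b ≠ 0 :=
  ⟨fun h hd => affinePerm_one_one_notMem_closure ha hd (h ▸ ⟨1, S.one_mem, 1, rfl⟩),
    closure_affinePerm_pair_eq_affineSubgroup hS hneg htop⟩

lemma affinePerm_one_pow (b : K) (k : ℕ) : affinePerm 1 b ^ k = affinePerm 1 (k * b) := by
  induction k with
  | zero => simp
  | succ k ih =>
    simp only [pow_succ, ih, affinePerm_mul, mul_one, Units.val_one, one_mul, Nat.cast_succ]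
    ring_nf

lemma orderOf_affinePerm_one_ne {n : ℕ} (hn1 : n ≠ 1) (hn : (n : K) ≠ 0) (b : K) :
    orderOf (affinePerm 1 b) ≠ n := by
  intro h
  have hpow := pow_orderOf_eq_one (affinePerm 1 b)
  rw [h, affinePerm_one_pow, ← affinePerm_one_zero, affinePerm_inj, mul_eq_zero] at hpow
  obtain rfl : b = 0 := hpow.2.resolve_left hn
  exact hn1 (by simpa using h.symm)

lemma setOf_generatingPair_eq_image {S : Subgroup Kˣ} {n : ℕ} (hneg : -1 ∈ S)
    (hn1 : n ≠ 1) (hn : (n : K) ≠ 0)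
    (hgen : ∀ a ∈ S, orderOf a = n → Subgroup.zpowers a = S ∧ Subring.closure {(a : K)} = ⊤) :
    {xy : Perm K × Perm K | xy.1 ∈ affineSubgroup S ∧ xy.2 ∈ affineSubgroup S ∧
        orderOf xy.1 = n ∧ orderOf xy.2 = 2 ∧ Subgroup.closure {xy.1, xy.2} = affineSubgroup S} =
      (fun t : Kˣ × K × K => (affinePerm t.1 t.2.1, affinePerm (-1) t.2.2)) ''
        {t | t.1 ∈ {a | a ∈ S ∧ orderOf a = n} ∧ ((t.1 : K) - 1) * t.2.2 + 2 * t.2.1 ≠ 0} := by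
  ext ⟨x, y⟩
  simp only [Set.mem_image, Prod.mk.injEq, Prod.exists]
  constructor
  · rintro ⟨⟨a, haS, b, rfl⟩, ⟨a', -, c, rfl⟩, hxo, hyo, hgen'⟩
    have ha1 : a ≠ 1 := by
      rintro rfl
      exact orderOf_affinePerm_one_ne hn1 hn b hxo
    have han : orderOf a = n := orderOf_affinePerm ha1 b ▸ hxo
    obtain ⟨rfl, -⟩ := orderOf_affinePerm_eq_two_iff.1 hyo
    obtain ⟨hS, htop⟩ := hgen a haS han
    have hd := (closure_affinePerm_pair_eq_affineSubgroup_iff hS hneg htop ha1).1 hgen'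
    exact ⟨a, b, c, ⟨⟨haS, han⟩, hd⟩, rfl, rfl⟩
  · rintro ⟨a, b, c, ⟨⟨haS, han⟩, hd⟩, rfl, rfl⟩
    obtain ⟨hS, htop⟩ := hgen a haS han
    have ha1 : a ≠ 1 := by
      rintro rfl
      exact hn1 (by simpa using han.symm)
    refine ⟨⟨a, haS, b, rfl⟩, ⟨-1, hneg, c, rfl⟩, (orderOf_affinePerm ha1 b).trans han,
      orderOf_affinePerm_eq_two_iff.2 ⟨rfl, fun h => hd ?_⟩,
      closure_affinePerm_pair_eq_affineSubgroup hS hneg htop hd⟩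
    rw [← affinePerm_one_zero, affinePerm_inj, Units.ext_iff] at h
    obtain ⟨h2, rfl⟩ := h
    simp only [Units.val_neg, Units.val_one] at h2
    linear_combination -b * h2

end Affine

theorem card_generating_pairs_AGL_general
    (p e n : ℕ) (hp : p.Prime)
    (F : Type) [Field F] [Fintype F] (hq : Fintype.card F = p ^ e)
    (hpar : Odd p → Even n)
    (S : Subgroup Fˣ) (hS : Nat.card S = n)
    (hadm : IsLeast {i : ℕ | 1 ≤ i ∧ p ^ i ≡ 1 [MOD n]} e)
    (hn1 : 1 < n)
    (A : Subgroup (Equiv.Perm F))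
    (hA : ∀ g : Equiv.Perm F,
      g ∈ A ↔ ∃ a ∈ S, ∃ b : F, ∀ v : F, g v = (a : F) * v + b) :
    Nat.card {xy : Equiv.Perm F × Equiv.Perm F //
        xy.1 ∈ A ∧ xy.2 ∈ A ∧ orderOf xy.1 = n ∧ orderOf xy.2 = 2 ∧
        Subgroup.closure ({xy.1, xy.2} : Set (Equiv.Perm F)) = A} =
      Nat.totient n * p ^ e * (p ^ e - 1) := by
  have : Fact p.Prime := ⟨hp⟩
  have : CharP F p := charP_of_card_eq_prime_pow hq
  obtain rfl : A = affineSubgroup S := Subgroup.ext fun g => (hA g).trans <| by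
    simp only [mem_affineSubgroup, Equiv.ext_iff, affinePerm_apply]
  have hneg : (-1 : Fˣ) ∈ S := by
    rcases hp.eq_two_or_odd' with rfl | hodd
    · rw [show (-1 : Fˣ) = 1 from Units.ext (CharTwo.neg_eq _)]
      exact S.one_mem
    · exact S.neg_one_mem_of_even_card (hS ▸ hpar hodd)
  have hgen (a : Fˣ) (ha : a ∈ S) (han : orderOf a = n) :
      Subgroup.zpowers a = S ∧ Subring.closure {(a : F)} = ⊤ :=
    ⟨Subgroup.eq_of_le_of_card_ge (Subgroup.zpowers_le.2 ha) (by rw [hS, Nat.card_zpowers, han]),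
      FiniteField.subring_closure_eq_top hp hq a fun i hi h => hadm.2 ⟨hi, han ▸ h⟩⟩
  have hinj : Function.Injective
      fun t : Fˣ × F × F => (affinePerm t.1 t.2.1, affinePerm (-1) t.2.2) := by
    rintro ⟨a, b, c⟩ ⟨a', b', c'⟩ h
    simp_all [affinePerm_inj]
  show Nat.card ↥{xy : Equiv.Perm F × Equiv.Perm F | _} = _
  rw [Nat.card_coe_set_eq, setOf_generatingPair_eq_image hneg hn1.ne'
      (hS ▸ FiniteField.natCast_card_subgroup_units_ne_zero S) hgen,
    Set.ncard_image_of_injective _ hinj,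
    ncard_setOf_sub_one_mul_add_two_mul_ne_zero fun h => hn1.ne' (by simpa using h.2.symm),
    S.ncard_setOf_orderOf_eq_totient hS.symm.dvd, Nat.card_eq_fintype_card, hq]

/-- Let `p` be prime, `e ≥ 1`, `q = p^e`, `F` a finite field with `q`
elements, `n` a divisor of `q - 1` (even if `p` is odd), and `S` the subgroup of order
`n` of `Fˣ`.  Assume `(q, n)` is admissible and `n > 1`, and let `A = AGL₁⁽ⁿ⁾(q)` be
the subgroup of `Perm F` of affine maps `v ↦ a v + b` with `a ∈ S`, `b ∈ F`.  Then the
number of ordered pairs `(x, y)` of elements of `A` with `x` of order `n`, `y` of order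
`2`, and `⟨x, y⟩ = A`, is `φ(n)·q·(q - 1)`. -/
theorem card_generating_pairs_AGL
    (p e n : ℕ) (hp : p.Prime) (he : 1 ≤ e)
    (F : Type) [Field F] [Fintype F] (hq : Fintype.card F = p ^ e)
    (hn : n ∣ p ^ e - 1) (hpar : Odd p → Even n)
    (S : Subgroup Fˣ) (hS : Nat.card S = n)
    (hadm : IsLeast {i : ℕ | 1 ≤ i ∧ p ^ i ≡ 1 [MOD n]} e)
    (hn1 : 1 < n)
    (A : Subgroup (Equiv.Perm F))
    (hA : ∀ g : Equiv.Perm F,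
      g ∈ A ↔ ∃ a ∈ S, ∃ b : F, ∀ v : F, g v = (a : F) * v + b) :
    Nat.card {xy : Equiv.Perm F × Equiv.Perm F //
        xy.1 ∈ A ∧ xy.2 ∈ A ∧ orderOf xy.1 = n ∧ orderOf xy.2 = 2 ∧
        Subgroup.closure ({xy.1, xy.2} : Set (Equiv.Perm F)) = A} =
      Nat.totient n * p ^ e * (p ^ e - 1) :=
  card_generating_pairs_AGL_general p e n hp F hq hpar S hS hadm hn1 A hA
end

section
/- Let G be a finite group acting faithfully and primitively on a finite set V, and suppose the stabiliser of each point of V is abelian and nontrivial. Then the stabilisers of any two distinct points of V intersect trivially; that is, G acts on V as a Frobenius group. -/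
/-!
Take `g` fixing two distinct points `v` and `w`. Because the stabilisers are self-normalising
maximal subgroups (a normal point stabiliser of a faithful transitive action is trivial), distinct
points have distinct stabilisers, and two distinct maximal subgroups generate `G`. Both stabilisers
are abelian and contain `g`, so both centralise `g`; hence `g` is central. A central element fixing
one point of a transitive action fixes every point, so `g = 1` by faithfulness.
-/

namespace Subgroup

variable {G : Type*} [Group G]

theorem normalizer_eq_self_of_isCoatom {H : Subgroup G} (hH : IsCoatom H) (hN : ¬H.Normal) :
    normalizer (H : Set G) = H :=
  (hH.le_iff.mp le_normalizer).resolve_left (mt normalizer_eq_top_iff.mp hN)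

theorem inf_le_center_of_sup_eq_top {H K : Subgroup G} (hH : H ≤ centralizer H)
    (hK : K ≤ centralizer K) (hHK : H ⊔ K = ⊤) : H ⊓ K ≤ center G := by
  rintro g ⟨hgH, hgK⟩
  have hcent : H ⊔ K ≤ centralizer {g} :=
    sup_le (hH.trans (centralizer_le (Set.singleton_subset_iff.mpr hgH)))
      (hK.trans (centralizer_le (Set.singleton_subset_iff.mpr hgK)))
  rw [hHK] at hcent
  exact mem_center_iff.mpr fun k => mem_centralizer_singleton_iff.mp (hcent (mem_top k))

end Subgroup

namespace MulAction

variable {G V : Type*} [Group G] [MulAction G V] [IsPretransitive G V]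

theorem eq_bot_of_normal_of_le_stabilizer [FaithfulSMul G V] {N : Subgroup G} [N.Normal]
    {v : V} (hN : N ≤ stabilizer G v) : N = ⊥ := by
  refine (Subgroup.eq_bot_iff_forall N).mpr fun n hn => faithfulSMul_iff.mp ‹_› n fun u => ?_
  obtain ⟨k, rfl⟩ := exists_smul_eq G v u
  have hconj : k⁻¹ * n * k ∈ stabilizer G v := hN (Subgroup.Normal.conj_mem' ‹_› n hn k)
  rwa [mem_stabilizer_iff, mul_smul, mul_smul, inv_smul_eq_iff] at hconj

theorem center_inf_stabilizer_eq_bot [FaithfulSMul G V] (v : V) :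
    Subgroup.center G ⊓ stabilizer G v = ⊥ := by
  refine (Subgroup.eq_bot_iff_forall _).mpr fun g ⟨hg, hgv⟩ =>
    faithfulSMul_iff.mp ‹_› g fun u => ?_
  obtain ⟨k, rfl⟩ := exists_smul_eq G v u
  rw [smul_smul, ← Subgroup.mem_center_iff.mp hg k, mul_smul, mem_stabilizer_iff.mp hgv]

theorem eq_of_stabilizer_eq_of_isCoatom {v w : V} (hmax : IsCoatom (stabilizer G v))
    (hN : ¬(stabilizer G v).Normal) (h : stabilizer G w = stabilizer G v) : w = v := by
  obtain ⟨k, rfl⟩ := exists_smul_eq G v w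
  rwa [stabilizer_smul_eq_stabilizer_map_conj, MulEquiv.toMonoidHom_eq_coe,
    ← Subgroup.mem_normalizer_iff_map_conj_eq, Subgroup.normalizer_eq_self_of_isCoatom hmax hN]
    at h

end MulAction

open MulAction Subgroup in
theorem frobenius_of_primitive_abelian_stabilizers_general
    (G : Type) [Group G] (V : Type) [MulAction G V]
    (hfaith : ∀ g : G, (∀ v : V, g • v = v) → g = 1)
    (htrans : MulAction.IsPretransitive G V)
    (hmax : ∀ v : V, IsCoatom (MulAction.stabilizer G v))
    (hab : ∀ v : V, ∀ g ∈ MulAction.stabilizer G v, ∀ h ∈ MulAction.stabilizer G v,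
      g * h = h * g)
    (hnt : ∀ v : V, MulAction.stabilizer G v ≠ ⊥) :
    ∀ v w : V, v ≠ w →
      MulAction.stabilizer G v ⊓ MulAction.stabilizer G w = ⊥ := by
  have : FaithfulSMul G V := faithfulSMul_iff.mpr hfaith
  have hnormal (v : V) : ¬(stabilizer G v).Normal := fun _ =>
    hnt v (eq_bot_of_normal_of_le_stabilizer le_rfl)
  have hcomm (v : V) : stabilizer G v ≤ centralizer (stabilizer G v) := fun h hh =>
    mem_centralizer_iff.mpr fun g hg => hab v g hg h hh
  intro v w hvw
  have hsup : stabilizer G v ⊔ stabilizer G w = ⊤ :=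
    (hmax v).sup_eq_top_of_ne (hmax w) fun h =>
      hvw (eq_of_stabilizer_eq_of_isCoatom (hmax w) (hnormal w) h)
  refine eq_bot_iff.mpr ((le_inf ?_ inf_le_left).trans (center_inf_stabilizer_eq_bot v).le)
  exact inf_le_center_of_sup_eq_top (hcomm v) (hcomm w) hsup

/-- Let `G` be a finite group acting faithfully and primitively on a
finite set `V` (transitively, with every point stabiliser a maximal subgroup), and
suppose each point stabiliser is abelian and nontrivial.  Then the stabilisers of any
two distinct points intersect trivially; i.e. `G` acts on `V` as a Frobenius group. -/
theorem frobenius_of_primitive_abelian_stabilizers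
    (G : Type) [Group G] [Finite G] (V : Type) [Finite V] [MulAction G V]
    (hfaith : ∀ g : G, (∀ v : V, g • v = v) → g = 1)
    (htrans : MulAction.IsPretransitive G V)
    (hmax : ∀ v : V, IsCoatom (MulAction.stabilizer G v))
    (hab : ∀ v : V, ∀ g ∈ MulAction.stabilizer G v, ∀ h ∈ MulAction.stabilizer G v,
      g * h = h * g)
    (hnt : ∀ v : V, MulAction.stabilizer G v ≠ ⊥) :
    ∀ v w : V, v ≠ w →
      MulAction.stabilizer G v ⊓ MulAction.stabilizer G w = ⊥ :=
  frobenius_of_primitive_abelian_stabilizers_general G V hfaith htrans hmax hab hnt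
end
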